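/- Let T > 0 and let u : [0,T] × ℝ³ → ℝ³ be a C² vector field such that for each t the field u(t,·) is axisymmetric without swirl, and suppose u solves the incompressible Euler equations: ∂ₜu + (u·∇)u + ∇π = 0 and div u = 0 for some C¹ function π : [0,T] × ℝ³ → ℝ. Let Ω = curl_x u and define α(t,x) = (x₁Ω²(t,x) − x₂Ω¹(t,x))/r(x)² (the quantity ω_θ/r). Then at every (t,x) with r(x) > 0 one has ∂ₜα + (u·∇)α = 0, i.e. α is transported by the flow. -/

import Mathlib

set_option maxHeartbeats 4000000
noncomputable section
open Real MeasureTheory Set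
open scoped ENNReal

/-- `ℝ³` with the Euclidean norm. -/
abbrev E3 : Type := EuclideanSpace ℝ (Fin 3)

/-- The point `(a, b, c) ∈ ℝ³`. -/
def mk3 (a b c : ℝ) : E3 := WithLp.toLp 2 ![a, b, c]

/-- Partial derivative `∂ᵢ f` of a scalar function on `ℝ³`. -/
def pd (f : E3 → ℝ) (i : Fin 3) (x : E3) : ℝ :=
  fderiv ℝ f x (EuclideanSpace.single i 1)

/-- The curl `(∂₂u³−∂₃u², ∂₃u¹−∂₁u³, ∂₁u²−∂₂u¹)` of a vector field on `ℝ³`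
(indices are `0`-based in Lean). -/
def curl3 (u : E3 → E3) (x : E3) : E3 :=
  mk3 (pd (fun y => u y 2) 1 x - pd (fun y => u y 1) 2 x)
      (pd (fun y => u y 0) 2 x - pd (fun y => u y 2) 0 x)
      (pd (fun y => u y 1) 0 x - pd (fun y => u y 0) 1 x)

/-- Rotation by angle `θ` about the `x₃`-axis. -/
def rotz (θ : ℝ) (x : E3) : E3 :=
  mk3 (Real.cos θ * x 0 - Real.sin θ * x 1) (Real.sin θ * x 0 + Real.cos θ * x 1) (x 2)

/-- A vector field is axisymmetric without swirl: it commutes with all rotations about the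
`x₃`-axis and `x₁·u² = x₂·u¹`. -/
def AxisymNoSwirl (u : E3 → E3) : Prop :=
  (∀ θ : ℝ, ∀ x : E3, u (rotz θ x) = rotz θ (u x)) ∧ ∀ x : E3, x 0 * u x 1 = x 1 * u x 0

/-- Distance to the `x₃`-axis: `r(x) = √(x₁² + x₂²)`. -/
def rr (x : E3) : ℝ := Real.sqrt (x 0 ^ 2 + x 1 ^ 2)

/-- The quantity `α = ω_θ/r = (x₁Ω² − x₂Ω¹)/r²` associated to a time-dependent field. -/
def alpha3 (u : ℝ → E3 → E3) (t : ℝ) (x : E3) : ℝ :=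
  (x 0 * curl3 (u t) x 1 - x 1 * curl3 (u t) x 0) / rr x ^ 2

local notation "sgl" => (EuclideanSpace.single : Fin 3 → ℝ → E3)

-- slice lemmas
variable {G : ℝ × E3 → ℝ}

lemma hasFDerivAt_slice (hG : Differentiable ℝ G) (t : ℝ) (x : E3) :
    HasFDerivAt (fun y => G (t, y)) ((fderiv ℝ G (t,x)).comp (ContinuousLinearMap.inr ℝ ℝ E3)) x :=
  (hG (t,x)).hasFDerivAt.comp x (HasFDerivAt.prodMk (hasFDerivAt_const t x) (hasFDerivAt_id x))

lemma pd_slice (hG : Differentiable ℝ G) (t : ℝ) (x : E3) (j : Fin 3) :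
    pd (fun y => G (t, y)) j x = fderiv ℝ G (t,x) (0, sgl j 1) := by
  rw [pd, (hasFDerivAt_slice hG t x).fderiv]; rfl

lemma hasDerivAt_slice (hG : Differentiable ℝ G) (t : ℝ) (x : E3) :
    HasDerivAt (fun s => G (s, x)) (fderiv ℝ G (t,x) (1, 0)) t :=
  (hG (t,x)).hasFDerivAt.comp_hasDerivAt t (HasDerivAt.prodMk (hasDerivAt_id t) (hasDerivAt_const t x))

lemma hasFDerivAt_fderiv_slice (hG : ContDiff ℝ 2 G) (t : ℝ) (x : E3) (v : ℝ × E3) :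
    HasFDerivAt (fun y => fderiv ℝ G (t, y) v)
      (((ContinuousLinearMap.apply ℝ ℝ v).comp (fderiv ℝ (fderiv ℝ G) (t,x))).comp
        (ContinuousLinearMap.inr ℝ ℝ E3)) x := by
  have h1 : ContDiff ℝ 1 (fderiv ℝ G) := hG.fderiv_right (by norm_num)
  exact ((ContinuousLinearMap.apply ℝ ℝ v).hasFDerivAt.comp _
    ((h1.differentiable (by norm_num) (t,x)).hasFDerivAt)).comp x
    (HasFDerivAt.prodMk (hasFDerivAt_const t x) (hasFDerivAt_id x))

lemma pd_fderiv_slice (hG : ContDiff ℝ 2 G) (t : ℝ) (x : E3) (v : ℝ × E3) (m : Fin 3) :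
    pd (fun y => fderiv ℝ G (t, y) v) m x = fderiv ℝ (fderiv ℝ G) (t,x) (0, sgl m 1) v := by
  rw [pd, (hasFDerivAt_fderiv_slice hG t x v).fderiv]; rfl

lemma hasDerivAt_fderiv_slice (hG : ContDiff ℝ 2 G) (t : ℝ) (x : E3) (v : ℝ × E3) :
    HasDerivAt (fun s => fderiv ℝ G (s, x) v) (fderiv ℝ (fderiv ℝ G) (t,x) (1, 0) v) t := by
  have h1 : ContDiff ℝ 1 (fderiv ℝ G) := hG.fderiv_right (by norm_num)
  exact ((ContinuousLinearMap.apply ℝ ℝ v).hasFDerivAt.comp _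
    ((h1.differentiable (by norm_num) (t,x)).hasFDerivAt)).comp_hasDerivAt t
    (HasDerivAt.prodMk (hasDerivAt_id t) (hasDerivAt_const t x))

lemma sndsymm (hG : ContDiff ℝ 2 G) (p : ℝ × E3) (v w : ℝ × E3) :
    fderiv ℝ (fderiv ℝ G) p v w = fderiv ℝ (fderiv ℝ G) p w v :=
  (hG.contDiffAt.isSymmSndFDerivAt (by norm_num)) v w

-- E3 basics
lemma proj_apply (x : E3) (i : Fin 3) : (EuclideanSpace.proj i : E3 →L[ℝ] ℝ) x = x i := rfl

lemma v_decomp (v : E3) : v = v 0 • sgl 0 1 + v 1 • sgl 1 1 + v 2 • sgl 2 1 := by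
  ext i
  fin_cases i <;> simp [EuclideanSpace.single_apply]

lemma clm_decomp (L : E3 →L[ℝ] ℝ) (v : E3) :
    L v = v 0 * L (sgl 0 1) + v 1 * L (sgl 1 1) + v 2 * L (sgl 2 1) := by
  conv_lhs => rw [v_decomp v]
  simp

lemma mk3_eq (a b c : ℝ) : mk3 a b c = a • sgl 0 1 + b • sgl 1 1 + c • sgl 2 1 := by
  ext i
  fin_cases i <;> simp [mk3, EuclideanSpace.single_apply]

lemma mk3_self (x : E3) : mk3 (x 0) (x 1) (x 2) = x := by
  ext i; fin_cases i <;> rfl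

lemma rotz_zero (x : E3) : rotz 0 x = x := by
  simp [rotz, mk3_self]

lemma hasDerivAt_rotz (x : E3) :
    HasDerivAt (fun θ => rotz θ x) ((-(x 1)) • sgl 0 1 + (x 0) • sgl 1 1) 0 := by
  have h0 : HasDerivAt (fun θ : ℝ => Real.cos θ * x 0 - Real.sin θ * x 1)
      (-(x 1)) 0 := by
    have := ((Real.hasDerivAt_cos 0).mul_const (x 0)).sub ((Real.hasDerivAt_sin 0).mul_const (x 1))
    simpa [Pi.sub_def] using this
  have h1 : HasDerivAt (fun θ : ℝ => Real.sin θ * x 0 + Real.cos θ * x 1) (x 0) 0 := by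
    have := ((Real.hasDerivAt_sin 0).mul_const (x 0)).add ((Real.hasDerivAt_cos 0).mul_const (x 1))
    simpa [Pi.add_def] using this
  have h2 : HasDerivAt (fun _ : ℝ => x 2) (0:ℝ) 0 := hasDerivAt_const _ _
  have := ((h0.smul_const (sgl 0 1)).add (h1.smul_const (sgl 1 1))).add (h2.smul_const (sgl 2 1))
  have heq : (fun θ => rotz θ x) = fun θ =>
      (Real.cos θ * x 0 - Real.sin θ * x 1) • sgl 0 1 +
      (Real.sin θ * x 0 + Real.cos θ * x 1) • sgl 1 1 + (x 2) • sgl 2 1 := by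
    funext θ; exact mk3_eq _ _ _
  rw [heq]
  simpa [Pi.add_def] using this

lemma rot_inf {v : E3 → E3} (hv : ∀ i, Differentiable ℝ (fun y => v y i))
    (hrot : ∀ θ x, v (rotz θ x) = rotz θ (v x)) (x : E3) (i : Fin 3) :
    x 0 * pd (fun y => v y i) 1 x - x 1 * pd (fun y => v y i) 0 x
      = ![-(v x 1), v x 0, 0] i := by
  have hL : HasDerivAt (fun θ => v (rotz θ x) i)
      (x 0 * pd (fun y => v y i) 1 x - x 1 * pd (fun y => v y i) 0 x) 0 := by
    have hc := ((hv i (rotz 0 x)).hasFDerivAt).comp_hasDerivAt 0 (hasDerivAt_rotz x)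
    rw [rotz_zero] at hc
    have : fderiv ℝ (fun y => v y i) x ((-(x 1)) • sgl 0 1 + (x 0) • sgl 1 1)
        = x 0 * pd (fun y => v y i) 1 x - x 1 * pd (fun y => v y i) 0 x := by
      rw [map_add, _root_.map_smul, _root_.map_smul]
      simp [pd]; ring
    rwa [this] at hc
  have hR : HasDerivAt (fun θ => rotz θ (v x) i) (![-(v x 1), v x 0, 0] i) 0 := by
    fin_cases i
    · have := ((Real.hasDerivAt_cos 0).mul_const (v x 0)).sub
        ((Real.hasDerivAt_sin 0).mul_const (v x 1))
      simpa [rotz, mk3, Pi.sub_def] using this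
    · have := ((Real.hasDerivAt_sin 0).mul_const (v x 0)).add
        ((Real.hasDerivAt_cos 0).mul_const (v x 1))
      simpa [rotz, mk3, Pi.add_def] using this
    · simpa [rotz, mk3] using hasDerivAt_const (0:ℝ) (v x 2)
  have heq : (fun θ => v (rotz θ x) i) = (fun θ => rotz θ (v x) i) := by
    funext θ; rw [hrot θ x]
  rw [heq] at hL
  exact hL.unique hR

lemma swirl_inf {v : E3 → E3} (hv : ∀ i, Differentiable ℝ (fun y => v y i))
    (hsw : ∀ y : E3, y 0 * v y 1 = y 1 * v y 0) (x : E3) (j : Fin 3) :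
    (sgl j 1) 0 * v x 1 + x 0 * pd (fun y => v y 1) j x
      = (sgl j 1) 1 * v x 0 + x 1 * pd (fun y => v y 0) j x := by
  have hL : HasFDerivAt (fun y : E3 => y 0 * v y 1)
      ((x 0) • (fderiv ℝ (fun y => v y 1) x)
        + (v x 1) • (EuclideanSpace.proj 0 : E3 →L[ℝ] ℝ)) x := by
    have := ((EuclideanSpace.proj (0:Fin 3)).hasFDerivAt (x := x)).mul ((hv 1 x).hasFDerivAt)
    simpa [proj_apply, Pi.mul_def] using this
  have hR : HasFDerivAt (fun y : E3 => y 1 * v y 0)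
      ((x 1) • (fderiv ℝ (fun y => v y 0) x)
        + (v x 0) • (EuclideanSpace.proj 1 : E3 →L[ℝ] ℝ)) x := by
    have := ((EuclideanSpace.proj (1:Fin 3)).hasFDerivAt (x := x)).mul ((hv 0 x).hasFDerivAt)
    simpa [proj_apply, Pi.mul_def] using this
  have heq : (fun y : E3 => y 0 * v y 1) = (fun y : E3 => y 1 * v y 0) := funext hsw
  rw [heq] at hL
  have := hL.unique hR
  have happ := congrArg (fun L => L (sgl j 1)) this
  simp only [ContinuousLinearMap.add_apply, ContinuousLinearMap.smul_apply, smul_eq_mul,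
    proj_apply] at happ
  simp only [pd]
  linarith

-- P reconstruction: C1 partials => C2
lemma fderiv_decomp {f : E3 → ℝ} (hf : DifferentiableAt ℝ f x) :
    fderiv ℝ f x = (fderiv ℝ f x (sgl 0 1)) • (EuclideanSpace.proj 0 : E3 →L[ℝ] ℝ)
      + (fderiv ℝ f x (sgl 1 1)) • (EuclideanSpace.proj 1 : E3 →L[ℝ] ℝ)
      + (fderiv ℝ f x (sgl 2 1)) • (EuclideanSpace.proj 2 : E3 →L[ℝ] ℝ) := by
  apply ContinuousLinearMap.ext
  intro v
  simp only [ContinuousLinearMap.add_apply, ContinuousLinearMap.smul_apply, smul_eq_mul,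
    proj_apply]
  rw [clm_decomp]
  ring

lemma contDiff2_of_partials {f : E3 → ℝ} (hf : Differentiable ℝ f) (g : Fin 3 → E3 → ℝ)
    (hg : ∀ k, ContDiff ℝ 1 (g k)) (h : ∀ y k, fderiv ℝ f y (sgl k 1) = g k y) :
    ContDiff ℝ 2 f := by
  rw [show (2 : WithTop ℕ∞) = 1 + 1 from rfl, contDiff_succ_iff_fderiv]
  refine ⟨hf, by simp, ?_⟩
  have : fderiv ℝ f = fun y => (g 0 y) • (EuclideanSpace.proj 0 : E3 →L[ℝ] ℝ)
      + (g 1 y) • (EuclideanSpace.proj 1 : E3 →L[ℝ] ℝ)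
      + (g 2 y) • (EuclideanSpace.proj 2 : E3 →L[ℝ] ℝ) := by
    funext y
    rw [fderiv_decomp (hf y), h y 0, h y 1, h y 2]
  rw [this]
  exact (((hg 0).smul contDiff_const).add ((hg 1).smul contDiff_const)).add
    ((hg 2).smul contDiff_const)

-- second derivatives on E3 (for the pressure)
lemma hasFDerivAt_pdE {f : E3 → ℝ} (hf : ContDiff ℝ 2 f) (x : E3) (k : Fin 3) :
    HasFDerivAt (fun y => pd f k y)
      ((ContinuousLinearMap.apply ℝ ℝ (sgl k 1)).comp (fderiv ℝ (fderiv ℝ f) x)) x := by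
  have h1 : ContDiff ℝ 1 (fderiv ℝ f) := hf.fderiv_right (by norm_num)
  exact (ContinuousLinearMap.apply ℝ ℝ (sgl k 1)).hasFDerivAt.comp _
    ((h1.differentiable (by norm_num) x).hasFDerivAt)

lemma sndsymmE {f : E3 → ℝ} (hf : ContDiff ℝ 2 f) (x : E3) (v w : E3) :
    fderiv ℝ (fderiv ℝ f) x v w = fderiv ℝ (fderiv ℝ f) x w v :=
  (hf.contDiffAt.isSymmSndFDerivAt (by norm_num)) v w


lemma contDiff_slice {G : ℝ × E3 → ℝ} (hG : ContDiff ℝ 1 G) (t : ℝ) :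
    ContDiff ℝ 1 (fun y : E3 => G (t, y)) :=
  hG.comp (contDiff_const.prodMk contDiff_id)

lemma contDiff_fderiv_slice {G : ℝ × E3 → ℝ} (hG : ContDiff ℝ 2 G) (t : ℝ) (v : ℝ × E3) :
    ContDiff ℝ 1 (fun y : E3 => fderiv ℝ G (t, y) v) := by
  have h1 : ContDiff ℝ 1 ((ContinuousLinearMap.apply ℝ ℝ v) ∘ (fderiv ℝ G)) :=
    (ContinuousLinearMap.apply ℝ ℝ v).contDiff.comp (hG.fderiv_right (by norm_num))
  exact contDiff_slice h1 t

def UU (u : ℝ → E3 → E3) (k : Fin 3) : ℝ × E3 → ℝ := fun p => u p.1 p.2 k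

def aa (u : ℝ → E3 → E3) (t : ℝ) (x : E3) (k j : Fin 3) : ℝ :=
  fderiv ℝ (UU u k) (t, x) (0, sgl j 1)

def cc (u : ℝ → E3 → E3) (t : ℝ) (x : E3) (k m : Fin 3) : ℝ :=
  fderiv ℝ (fderiv ℝ (UU u k)) (t, x) (1, 0) (0, sgl m 1)

def ss (u : ℝ → E3 → E3) (t : ℝ) (x : E3) (k m j : Fin 3) : ℝ :=
  fderiv ℝ (fderiv ℝ (UU u k)) (t, x) (0, sgl m 1) (0, sgl j 1)

def qq (P : ℝ → E3 → ℝ) (t : ℝ) (x : E3) (m k : Fin 3) : ℝ :=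
  fderiv ℝ (fderiv ℝ (P t)) x (sgl m 1) (sgl k 1)

lemma aa_def (u : ℝ → E3 → E3) (t : ℝ) (x : E3) (k j : Fin 3) :
    fderiv ℝ (UU u k) (t, x) (0, EuclideanSpace.single j 1) = aa u t x k j := rfl

lemma cc_def (u : ℝ → E3 → E3) (t : ℝ) (x : E3) (k m : Fin 3) :
    fderiv ℝ (fderiv ℝ (UU u k)) (t, x) (1, 0) (0, EuclideanSpace.single m 1)
      = cc u t x k m := rfl

lemma ss_def (u : ℝ → E3 → E3) (t : ℝ) (x : E3) (k m j : Fin 3) :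
    fderiv ℝ (fderiv ℝ (UU u k)) (t, x) (0, EuclideanSpace.single m 1)
        (0, EuclideanSpace.single j 1) = ss u t x k m j := rfl

section euler
variable {u : ℝ → E3 → E3} {P : ℝ → E3 → ℝ}

lemma hUUc (hu : ContDiff ℝ 2 fun p : ℝ × E3 => u p.1 p.2) (k : Fin 3) :
    ContDiff ℝ 2 (UU u k) := by
  have : ContDiff ℝ 2 ((EuclideanSpace.proj k : E3 →L[ℝ] ℝ) ∘ fun p : ℝ × E3 => u p.1 p.2) :=
    (EuclideanSpace.proj k).contDiff.comp hu
  exact this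

lemma euler_diff (hu : ContDiff ℝ 2 fun p : ℝ × E3 => u p.1 p.2)
    (t : ℝ) (hPt2 : ContDiff ℝ 2 (P t))
    (heul : ∀ y : E3, ∀ i : Fin 3,
      deriv (fun s => u s y i) t + (∑ j : Fin 3, u t y j * pd (fun z => u t z i) j y)
        + pd (P t) i y = 0)
    (x : E3) (k m : Fin 3) :
    cc u t x k m
      + (aa u t x 0 m * aa u t x k 0 + aa u t x 1 m * aa u t x k 1
          + aa u t x 2 m * aa u t x k 2)
      + (u t x 0 * ss u t x k m 0 + u t x 1 * ss u t x k m 1 + u t x 2 * ss u t x k m 2)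
      + qq P t x m k = 0 := by
  have hUd : ∀ i, Differentiable ℝ (UU u i) := fun i => (hUUc hu i).differentiable (by norm_num)
  -- the Euler equation as a function of y, in fderiv form
  have hfun : (fun y : E3 => fderiv ℝ (UU u k) (t, y) (1, 0)
      + (u t y 0 * fderiv ℝ (UU u k) (t, y) (0, sgl 0 1)
        + u t y 1 * fderiv ℝ (UU u k) (t, y) (0, sgl 1 1)
        + u t y 2 * fderiv ℝ (UU u k) (t, y) (0, sgl 2 1))
      + pd (P t) k y) = fun _ => (0:ℝ) := by
    funext y
    have h1 : deriv (fun s => u s y k) t = fderiv ℝ (UU u k) (t, y) (1, 0) :=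
      (hasDerivAt_slice (hUd k) t y).deriv
    have h2 : ∀ j, pd (fun z => u t z k) j y = fderiv ℝ (UU u k) (t, y) (0, sgl j 1) :=
      fun j => pd_slice (hUd k) t y j
    have := heul y k
    rw [Fin.sum_univ_three, h1, h2 0, h2 1, h2 2] at this
    exact this
  -- HasFDerivAt of each piece
  have hA := hasFDerivAt_fderiv_slice (hUUc hu k) t x ((1:ℝ), (0:E3))
  have hB : ∀ j : Fin 3, HasFDerivAt
      (fun y : E3 => u t y j * fderiv ℝ (UU u k) (t, y) (0, sgl j 1))
      (u t x j • ((((ContinuousLinearMap.apply ℝ ℝ ((0:ℝ), sgl j 1)).comp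
          (fderiv ℝ (fderiv ℝ (UU u k)) (t,x))).comp (ContinuousLinearMap.inr ℝ ℝ E3)))
        + fderiv ℝ (UU u k) (t,x) (0, sgl j 1) •
            ((fderiv ℝ (UU u j) (t,x)).comp (ContinuousLinearMap.inr ℝ ℝ E3))) x := by
    intro j
    exact (hasFDerivAt_slice (hUd j) t x).mul (hasFDerivAt_fderiv_slice (hUUc hu k) t x _)
  have hC := hasFDerivAt_pdE hPt2 x k
  have hbig := (hA.add (((hB 0).add (hB 1)).add (hB 2))).add hC
  simp only [Pi.add_def] at hbig
  rw [hfun] at hbig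
  have hzero := hbig.unique (hasFDerivAt_const 0 x)
  have happ := congrArg (fun L => L (sgl m 1)) hzero
  simp only [ContinuousLinearMap.add_apply, ContinuousLinearMap.smul_apply,
    ContinuousLinearMap.coe_comp', Function.comp_apply, ContinuousLinearMap.inr_apply,
    ContinuousLinearMap.apply_apply, ContinuousLinearMap.zero_apply, smul_eq_mul] at happ
  have hsym := sndsymm (hUUc hu k) (t,x)
  simp only [aa, cc, ss, qq, UU]
  rw [show fderiv ℝ (fderiv ℝ (UU u k)) (t,x) (1,0) (0, sgl m 1)
      = fderiv ℝ (fderiv ℝ (UU u k)) (t,x) (0, sgl m 1) (1,0) from hsym _ _]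
  linear_combination happ
end euler


/-- If `u` is a `C²` axisymmetric-without-swirl solution of the incompressible
Euler equations on `[0,T] × ℝ³` (with a `C¹` pressure `P`), then `α = ω_θ/r` is transported by
the flow: `∂ₜα + (u·∇)α = 0` wherever `r(x) > 0`. -/
theorem alpha_transported (T : ℝ) (hT : 0 < T) (u : ℝ → E3 → E3) (P : ℝ → E3 → ℝ)
    (hu : ContDiff ℝ 2 fun p : ℝ × E3 => u p.1 p.2)
    (hP : ContDiff ℝ 1 fun p : ℝ × E3 => P p.1 p.2)
    (hax : ∀ t ∈ Set.Icc (0:ℝ) T, AxisymNoSwirl (u t))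
    (heuler : ∀ t ∈ Set.Icc (0:ℝ) T, ∀ x : E3, ∀ i : Fin 3,
      deriv (fun s => u s x i) t + (∑ j : Fin 3, u t x j * pd (fun y => u t y i) j x)
        + pd (P t) i x = 0)
    (hdiv : ∀ t ∈ Set.Icc (0:ℝ) T, ∀ x : E3,
      (∑ j : Fin 3, pd (fun y => u t y j) j x) = 0) :
    ∀ t ∈ Set.Icc (0:ℝ) T, ∀ x : E3, 0 < rr x →
      deriv (fun s => alpha3 u s x) t
        + (∑ j : Fin 3, u t x j * pd (alpha3 u t) j x) = 0 := by
  intro t ht x hx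
  obtain ⟨hrot, hsw⟩ := hax t ht
  have hUd : ∀ i, Differentiable ℝ (UU u i) := fun i => (hUUc hu i).differentiable (by norm_num)
  have hvd : ∀ i, Differentiable ℝ (fun y => u t y i) := fun i y =>
    (hasFDerivAt_slice (hUd i) t y).differentiableAt
  have hx0 : (0:ℝ) < x 0 ^ 2 + x 1 ^ 2 := Real.sqrt_pos.mp hx
  have hne : (x 0 ^ 2 + x 1 ^ 2) ≠ 0 := ne_of_gt hx0
  have hne' : (x 0 * x 0 + x 1 * x 1) ≠ 0 := by nlinarith
  have hrr2 : rr x ^ 2 = x 0 ^ 2 + x 1 ^ 2 := Real.sq_sqrt (by positivity)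
  -- pd and deriv conversions
  have hpds : ∀ (s : ℝ) (y : E3) (k j : Fin 3),
      pd (fun z => u s z k) j y = fderiv ℝ (UU u k) (s, y) (0, sgl j 1) :=
    fun s y k j => pd_slice (hUd k) s y j
  have hdtv : ∀ (y : E3) (k : Fin 3),
      deriv (fun s => u s y k) t = fderiv ℝ (UU u k) (t, y) (1, 0) :=
    fun y k => (hasDerivAt_slice (hUd k) t y).deriv
  have hpd : ∀ k j, pd (fun y => u t y k) j x = aa u t x k j := fun k j => hpds t x k j
  -- rotation identities
  have hR0 : x 0 * aa u t x 0 1 - x 1 * aa u t x 0 0 = -(u t x 1) := by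
    have h := rot_inf hvd hrot x 0
    rw [hpd 0 1, hpd 0 0] at h
    simpa using h
  have hR1 : x 0 * aa u t x 1 1 - x 1 * aa u t x 1 0 = u t x 0 := by
    have h := rot_inf hvd hrot x 1
    rw [hpd 1 1, hpd 1 0] at h
    simpa using h
  have hR2 : x 0 * aa u t x 2 1 - x 1 * aa u t x 2 0 = 0 := by
    have h := rot_inf hvd hrot x 2
    rw [hpd 2 1, hpd 2 0] at h
    simpa using h
  -- swirl identities
  have hSw : ∀ j : Fin 3, (sgl j 1) 0 * u t x 1 + x 0 * aa u t x 1 j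
      = (sgl j 1) 1 * u t x 0 + x 1 * aa u t x 0 j := by
    intro j
    have h := swirl_inf hvd hsw x j
    rwa [hpd 1 j, hpd 0 j] at h
  have hSw0 : u t x 1 + x 0 * aa u t x 1 0 = x 1 * aa u t x 0 0 := by
    have h := hSw 0
    simp [EuclideanSpace.single_apply] at h
    linarith
  have hSw1 : x 0 * aa u t x 1 1 = u t x 0 + x 1 * aa u t x 0 1 := by
    have h := hSw 1
    simp [EuclideanSpace.single_apply] at h
    linarith
  have hSw2 : x 0 * aa u t x 1 2 = x 1 * aa u t x 0 2 := by
    have h := hSw 2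
    simp [EuclideanSpace.single_apply] at h
    linarith
  have h2 : x 0 * (aa u t x 1 0 - aa u t x 0 1) = 0 := by linear_combination hSw0 - hR0
  have h3 : x 1 * (aa u t x 1 0 - aa u t x 0 1) = 0 := by linear_combination hSw1 - hR1
  have h4 : x 0 * (aa u t x 2 1 - aa u t x 1 2) + x 1 * (aa u t x 0 2 - aa u t x 2 0) = 0 := by
    linear_combination hR2 - hSw2
  -- divergence
  have hdivA : aa u t x 0 0 + aa u t x 1 1 + aa u t x 2 2 = 0 := by
    have h := hdiv t ht x
    rwa [Fin.sum_univ_three, hpd 0 0, hpd 1 1, hpd 2 2] at h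
  -- the pressure is C² in space
  have hP1 : Differentiable ℝ (fun p : ℝ × E3 => P p.1 p.2) := hP.differentiable (by norm_num)
  have hPt1 : Differentiable ℝ (P t) := fun y => (hasFDerivAt_slice hP1 t y).differentiableAt
  have hPt2 : ContDiff ℝ 2 (P t) := by
    apply contDiff2_of_partials hPt1 (fun k y => -(fderiv ℝ (UU u k) (t, y) (1, 0))
      - (u t y 0 * fderiv ℝ (UU u k) (t, y) (0, sgl 0 1)
        + u t y 1 * fderiv ℝ (UU u k) (t, y) (0, sgl 1 1)
        + u t y 2 * fderiv ℝ (UU u k) (t, y) (0, sgl 2 1)))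
    · intro k
      refine (contDiff_fderiv_slice (hUUc hu k) t _).neg.sub ?_
      have hsl : ∀ j : Fin 3, ContDiff ℝ 1 (fun y : E3 => u t y j) := fun j =>
        contDiff_slice ((hUUc hu j).of_le (by norm_num)) t
      exact (((hsl 0).mul (contDiff_fderiv_slice (hUUc hu k) t _)).add
        ((hsl 1).mul (contDiff_fderiv_slice (hUUc hu k) t _))).add
        ((hsl 2).mul (contDiff_fderiv_slice (hUUc hu k) t _))
    · intro y k
      have h := heuler t ht y k
      rw [Fin.sum_univ_three, hdtv y k, hpds t y k 0, hpds t y k 1, hpds t y k 2] at h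
      have hh : pd (P t) k y = fderiv ℝ (P t) y (EuclideanSpace.single k 1) := rfl
      rw [hh] at h
      linarith
  have hQa : qq P t x 2 0 = qq P t x 0 2 := sndsymmE hPt2 x _ _
  have hQb : qq P t x 1 2 = qq P t x 2 1 := sndsymmE hPt2 x _ _
  -- differentiated Euler equations
  have hE := euler_diff hu t hPt2 (fun y i => heuler t ht y i) x
  -- spatial second-derivative symmetry
  have hS020 : ss u t x 0 2 0 = ss u t x 0 0 2 := sndsymm (hUUc hu 0) (t,x) _ _
  have hS021 : ss u t x 0 2 1 = ss u t x 0 1 2 := sndsymm (hUUc hu 0) (t,x) _ _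
  have hS200 : ss u t x 2 0 0 = ss u t x 2 0 0 := rfl
  have hS201 : ss u t x 2 0 1 = ss u t x 2 1 0 := sndsymm (hUUc hu 2) (t,x) _ _
  have hS202 : ss u t x 2 0 2 = ss u t x 2 2 0 := sndsymm (hUUc hu 2) (t,x) _ _
  have hS210 : ss u t x 2 1 0 = ss u t x 2 0 1 := sndsymm (hUUc hu 2) (t,x) _ _
  have hS211 : ss u t x 2 1 1 = ss u t x 2 1 1 := rfl
  have hS212 : ss u t x 2 1 2 = ss u t x 2 2 1 := sndsymm (hUUc hu 2) (t,x) _ _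
  have hS120 : ss u t x 1 2 0 = ss u t x 1 0 2 := sndsymm (hUUc hu 1) (t,x) _ _
  have hS121 : ss u t x 1 2 1 = ss u t x 1 1 2 := sndsymm (hUUc hu 1) (t,x) _ _
  have hS022 : ss u t x 0 2 2 = ss u t x 0 2 2 := rfl
  have hS122 : ss u t x 1 2 2 = ss u t x 1 2 2 := rfl
  -- vorticity transport, component 1 (Ω¹)
  have h1 : cc u t x 0 2 - cc u t x 2 0
      + (u t x 0 * (ss u t x 0 0 2 - ss u t x 2 0 0)
        + u t x 1 * (ss u t x 0 1 2 - ss u t x 2 1 0)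
        + u t x 2 * (ss u t x 0 2 2 - ss u t x 2 2 0))
      - ((aa u t x 2 1 - aa u t x 1 2) * aa u t x 1 0
        + (aa u t x 0 2 - aa u t x 2 0) * aa u t x 1 1
        + (aa u t x 1 0 - aa u t x 0 1) * aa u t x 1 2)
      + (aa u t x 0 2 - aa u t x 2 0)
          * (aa u t x 0 0 + aa u t x 1 1 + aa u t x 2 2) = 0 := by
    linear_combination (hE 0 2) - (hE 2 0) - hQa - u t x 0 * hS020 - u t x 1 * hS021
      + u t x 1 * hS201 + u t x 2 * hS202
  -- vorticity transport, component 0 (Ω⁰)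
  have h0 : cc u t x 2 1 - cc u t x 1 2
      + (u t x 0 * (ss u t x 2 0 1 - ss u t x 1 0 2)
        + u t x 1 * (ss u t x 2 1 1 - ss u t x 1 1 2)
        + u t x 2 * (ss u t x 2 2 1 - ss u t x 1 2 2))
      - ((aa u t x 2 1 - aa u t x 1 2) * aa u t x 0 0
        + (aa u t x 0 2 - aa u t x 2 0) * aa u t x 0 1
        + (aa u t x 1 0 - aa u t x 0 1) * aa u t x 0 2)
      + (aa u t x 2 1 - aa u t x 1 2)
          * (aa u t x 0 0 + aa u t x 1 1 + aa u t x 2 2) = 0 := by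
    linear_combination (hE 2 1) - (hE 1 2) - hQb - u t x 0 * hS210 - u t x 2 * hS212
      + u t x 0 * hS120 + u t x 1 * hS121
  -- time derivative of α
  have hfunT : (fun s => alpha3 u s x) = fun s =>
      (x 0 * (fderiv ℝ (UU u 0) (s, x) (0, sgl 2 1) - fderiv ℝ (UU u 2) (s, x) (0, sgl 0 1))
        - x 1 * (fderiv ℝ (UU u 2) (s, x) (0, sgl 1 1)
            - fderiv ℝ (UU u 1) (s, x) (0, sgl 2 1))) / (x 0 ^ 2 + x 1 ^ 2) := by
    funext s
    simp only [alpha3]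
    rw [hrr2,
      show curl3 (u s) x 1 = pd (fun y => u s y 0) 2 x - pd (fun y => u s y 2) 0 x from rfl,
      show curl3 (u s) x 0 = pd (fun y => u s y 2) 1 x - pd (fun y => u s y 1) 2 x from rfl,
      hpds s x 0 2, hpds s x 2 0, hpds s x 2 1, hpds s x 1 2]
  have hTd : deriv (fun s => alpha3 u s x) t
      = (x 0 * (cc u t x 0 2 - cc u t x 2 0) - x 1 * (cc u t x 2 1 - cc u t x 1 2))
        / (x 0 ^ 2 + x 1 ^ 2) := by
    rw [hfunT]
    exact (((((hasDerivAt_fderiv_slice (hUUc hu 0) t x _).sub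
      (hasDerivAt_fderiv_slice (hUUc hu 2) t x _)).const_mul (x 0)).sub
      (((hasDerivAt_fderiv_slice (hUUc hu 2) t x _).sub
      (hasDerivAt_fderiv_slice (hUUc hu 1) t x _)).const_mul (x 1))).div_const _).deriv
  -- spatial derivatives of α
  have hfunX : alpha3 u t = fun y : E3 =>
      (y 0 * (fderiv ℝ (UU u 0) (t, y) (0, sgl 2 1) - fderiv ℝ (UU u 2) (t, y) (0, sgl 0 1))
        - y 1 * (fderiv ℝ (UU u 2) (t, y) (0, sgl 1 1)
            - fderiv ℝ (UU u 1) (t, y) (0, sgl 2 1))) * (y 0 * y 0 + y 1 * y 1)⁻¹ := by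
    funext y
    simp only [alpha3]
    rw [show rr y ^ 2 = y 0 ^ 2 + y 1 ^ 2 from Real.sq_sqrt (by positivity),
      show curl3 (u t) y 1 = pd (fun z => u t z 0) 2 y - pd (fun z => u t z 2) 0 y from rfl,
      show curl3 (u t) y 0 = pd (fun z => u t z 2) 1 y - pd (fun z => u t z 1) 2 y from rfl,
      hpds t y 0 2, hpds t y 2 0, hpds t y 2 1, hpds t y 1 2, div_eq_mul_inv]
    ring_nf
  have hprj : ∀ i : Fin 3, HasFDerivAt (fun y : E3 => y i)
      (EuclideanSpace.proj i : E3 →L[ℝ] ℝ) x := by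
    intro i
    have h := (EuclideanSpace.proj (𝕜 := ℝ) (i := i) (ι := Fin 3)).hasFDerivAt (x := x)
    exact h
  have hc1 := (hasFDerivAt_fderiv_slice (hUUc hu 0) t x ((0:ℝ), sgl 2 1)).sub
    (hasFDerivAt_fderiv_slice (hUUc hu 2) t x ((0:ℝ), sgl 0 1))
  have hc0 := (hasFDerivAt_fderiv_slice (hUUc hu 2) t x ((0:ℝ), sgl 1 1)).sub
    (hasFDerivAt_fderiv_slice (hUUc hu 1) t x ((0:ℝ), sgl 2 1))
  have hN := ((hprj 0).mul hc1).sub ((hprj 1).mul hc0)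
  have hdd := ((hprj 0).mul (hprj 0)).add ((hprj 1).mul (hprj 1))
  have hinv := (hasDerivAt_inv hne').comp_hasFDerivAt x hdd
  have halpx := hN.mul hinv
  simp only [Function.comp_def, Pi.add_def, Pi.sub_def, Pi.mul_def] at halpx
  rw [← hfunX] at halpx
  rw [Fin.sum_univ_three, hTd]
  simp only [pd]
  rw [halpx.fderiv]
  simp only [ContinuousLinearMap.add_apply, ContinuousLinearMap.smul_apply,
    ContinuousLinearMap.sub_apply, ContinuousLinearMap.coe_comp', Function.comp_apply,
    ContinuousLinearMap.inr_apply, ContinuousLinearMap.apply_apply, smul_eq_mul,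
    proj_apply, EuclideanSpace.single_apply]
  norm_num [Fin.ext_iff]
  simp only [ss_def, cc_def, aa_def]
  field_simp
  linear_combination ((x 0 ^ 2 + x 1 ^ 2) * x 0 * h1 - (x 0 ^ 2 + x 1 ^ 2) * x 1 * h0 + (x 0 * (aa u t x 0 2 - aa u t x 2 0) - x 1 * (aa u t x 2 1 - aa u t x 1 2)) * x 0 * hR1 - (x 0 * (aa u t x 0 2 - aa u t x 2 0) - x 1 * (aa u t x 2 1 - aa u t x 1 2)) * x 1 * hR0 - (x 0 * (aa u t x 0 2 - aa u t x 2 0) - x 1 * (aa u t x 2 1 - aa u t x 1 2)) * (x 0 ^ 2 + x 1 ^ 2) * hdivA + (x 0 ^ 2 * aa u t x 1 0 - x 0 * x 1 * aa u t x 0 0 + x 0 * x 1 * aa u t x 1 1 - x 1 ^ 2 * aa u t x 0 1 + x 1 * u t x 0 - x 0 * u t x 1) * h4 + (x 0 ^ 2 * aa u t x 1 2 - x 0 * x 1 * aa u t x 0 2) * h2 + (x 0 * x 1 * aa u t x 1 2 - x 1 ^ 2 * aa u t x 0 2) * h3)
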